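/- Let 𝒜 ⊆ M_n be a *-subalgebra with identity. For any projection p ∈ 𝒜 (p = p* = p²), the set {a hermitian in 𝒜 | p ⪯ p_0(a)} equals ℝ·id + p'𝒜⁺p', where p' = id − p, 𝒜⁺ is the cone of positive semidefinite elements of 𝒜, and p_0(a) is the ground projection of a. -/

import Mathlib

/-
Let `λ₀ = minEig a`. The real eigenvalues of a matrix form its real spectrum, so for hermitian
`a` the continuous functional calculus gives `λ₀ ≤ a` in the Löwner order, and `p ⪯ p₀(a)` says
exactly that the positive matrix `b = a - λ₀` satisfies `b p = 0`. A hermitian `b` with `b p = 0`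
also has `p b = 0`, hence `b = p' b p'`, so `a = λ₀ + p' b p'`. Conversely `a = t + p' b p'` is
`≥ t` and acts as `t` on the range of `p` (as `p' p = 0`), so there `t` is its least eigenvalue.
-/

open Matrix
open scoped ComplexOrder

/-- The smallest eigenvalue (ground energy) of a matrix. -/
noncomputable def minEig {n : ℕ} (a : Matrix (Fin n) (Fin n) ℂ) : ℝ :=
  sInf {c : ℝ | ∃ v : Fin n → ℂ, v ≠ 0 ∧ a.mulVec v = (c : ℂ) • v}

/-- The ground space of a hermitian matrix: the eigenspace of its smallest eigenvalue. -/
noncomputable def groundSpaceSet {n : ℕ} (a : Matrix (Fin n) (Fin n) ℂ) :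
    Set (Fin n → ℂ) :=
  {v | a.mulVec v = (minEig a : ℂ) • v}

open scoped MatrixOrder

lemma one_sub_mul_mul_one_sub_eq_self_of_mul_eq_zero {R : Type*} [Ring R] [StarRing R] {p b : R}
    (hp : IsSelfAdjoint p) (hb : IsSelfAdjoint b) (hbp : b * p = 0) :
    (1 - p) * b * (1 - p) = b := by
  have hpb : p * b = 0 := by simpa [hp.star_eq, hb.star_eq] using congrArg star hbp
  simp only [sub_mul, mul_sub, one_mul, mul_one, hpb, hbp, sub_zero]

namespace Matrix

section

variable {ι : Type*} [Fintype ι] [DecidableEq ι]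

lemma algebraMap_real_mulVec (t : ℝ) (v : ι → ℂ) :
    algebraMap ℝ (Matrix ι ι ℂ) t *ᵥ v = (t : ℂ) • v := by
  rw [Algebra.algebraMap_eq_smul_one, smul_mulVec, one_mulVec]
  rfl

lemma mem_spectrum_real_iff_exists_mulVec_eq_smul {a : Matrix ι ι ℂ} {c : ℝ} :
    c ∈ spectrum ℝ a ↔ ∃ v : ι → ℂ, v ≠ 0 ∧ a *ᵥ v = (c : ℂ) • v := by
  rw [spectrum.mem_iff, isUnit_iff_isUnit_det, isUnit_iff_ne_zero, not_not,
    ← exists_mulVec_eq_zero_iff]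
  simp only [sub_mulVec, algebraMap_real_mulVec, sub_eq_zero, eq_comm]

end

variable {n : ℕ}

lemma minEig_eq_sInf_spectrum (a : Matrix (Fin n) (Fin n) ℂ) :
    minEig a = sInf (spectrum ℝ a) := by
  rw [minEig]
  congr 1
  ext c
  exact mem_spectrum_real_iff_exists_mulVec_eq_smul.symm

lemma algebraMap_minEig_le {a : Matrix (Fin n) (Fin n) ℂ} (ha : a.IsHermitian) :
    algebraMap ℝ _ (minEig a) ≤ a := by
  rw [algebraMap_le_iff_le_spectrum ha, minEig_eq_sInf_spectrum]
  exact fun x hx => csInf_le finite_real_spectrum.bddBelow hx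

lemma sub_algebraMap_minEig_mul_eq_zero {a p : Matrix (Fin n) (Fin n) ℂ}
    (h : Set.range p.mulVec ⊆ groundSpaceSet a) :
    (a - algebraMap ℝ _ (minEig a)) * p = 0 := by
  refine ext_of_mulVec_single fun i => ?_
  have hground : a *ᵥ (p *ᵥ Pi.single i 1) = (minEig a : ℂ) • (p *ᵥ Pi.single i 1) :=
    h ⟨_, rfl⟩
  rw [← mulVec_mulVec, sub_mulVec, hground, algebraMap_real_mulVec, sub_self, zero_mulVec]

lemma mem_groundSpaceSet_of_algebraMap_le {a : Matrix (Fin n) (Fin n) ℂ} {t : ℝ}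
    (h : algebraMap ℝ _ t ≤ a) {v : Fin n → ℂ} (hv : a *ᵥ v = (t : ℂ) • v) :
    v ∈ groundSpaceSet a := by
  rcases eq_or_ne v 0 with rfl | hv0
  · simp [groundSpaceSet]
  have ha : IsSelfAdjoint a := ((IsSelfAdjoint.all t).algebraMap _).of_ge h
  have hmin : minEig a = t := by
    rw [minEig_eq_sInf_spectrum]
    exact IsLeast.csInf_eq ⟨mem_spectrum_real_iff_exists_mulVec_eq_smul.mpr ⟨v, hv0, hv⟩,
      (algebraMap_le_iff_le_spectrum ha).mp h⟩
  rw [groundSpaceSet, Set.mem_ofPred_eq, hmin]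
  exact hv

end Matrix

/-- Let `𝒜 ⊆ Mₙ(ℂ)` be a *-subalgebra with identity and `p ∈ 𝒜` a
projection.  Then `{a hermitian in 𝒜 | p ⪯ p₀(a)} = ℝ·id + p'𝒜⁺p'` with `p' = 1 - p`;
here `p ⪯ p₀(a)` says the ground space of `a` contains the image of `p`. -/
theorem stmt6 {n : ℕ} (𝒜 : StarSubalgebra ℂ (Matrix (Fin n) (Fin n) ℂ))
    (p : Matrix (Fin n) (Fin n) ℂ) (hp : p ∈ 𝒜) (hpH : pᴴ = p) (hpi : p * p = p) :
    {a | a ∈ 𝒜 ∧ aᴴ = a ∧ Set.range p.mulVec ⊆ groundSpaceSet a}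
      = {a | ∃ t : ℝ, ∃ b : Matrix (Fin n) (Fin n) ℂ, b ∈ 𝒜 ∧ b.PosSemidef ∧
          a = t • (1 : Matrix (Fin n) (Fin n) ℂ) + (1 - p) * b * (1 - p)} := by
  have hreal (t : ℝ) : algebraMap ℝ _ t ∈ 𝒜 :=
    IsScalarTower.algebraMap_apply ℝ ℂ (Matrix (Fin n) (Fin n) ℂ) t ▸ 𝒜.algebraMap_mem _
  have hq : IsSelfAdjoint (1 - p) := (IsSelfAdjoint.one _).sub hpH
  ext a
  constructor
  · rintro ⟨haA, haH, hground⟩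
    have hb := le_iff.mp (algebraMap_minEig_le haH)
    refine ⟨minEig a, _, sub_mem haA (hreal _), hb, ?_⟩
    rw [one_sub_mul_mul_one_sub_eq_self_of_mul_eq_zero hpH hb.isHermitian
      (sub_algebraMap_minEig_mul_eq_zero hground), ← Algebra.algebraMap_eq_smul_one,
      add_sub_cancel]
  · rintro ⟨t, b, hbA, hb, rfl⟩
    rw [← Algebra.algebraMap_eq_smul_one]
    have hle : algebraMap ℝ _ t ≤ algebraMap ℝ _ t + (1 - p) * b * (1 - p) :=
      le_add_of_nonneg_right (hq.conjugate_nonneg hb.nonneg)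
    refine ⟨add_mem (hreal t) (mul_mem (mul_mem (sub_mem (one_mem _) hp) hbA)
      (sub_mem (one_mem _) hp)), ((IsSelfAdjoint.all t).algebraMap _).of_ge hle, ?_⟩
    rintro _ ⟨v, rfl⟩
    refine mem_groundSpaceSet_of_algebraMap_le hle ?_
    rw [add_mulVec, algebraMap_real_mulVec, mulVec_mulVec, Matrix.mul_assoc,
      IsIdempotentElem.one_sub_mul_self hpi, Matrix.mul_zero, zero_mulVec, add_zero]
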